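/- arXiv:2011.03027 — 2 statements merged into one kernel-verified Lean document; each statement's English description precedes it below -/
import Mathlib

section
/- For n ≥ 2 and 2 ≤ k ≤ n, and an object (i,j) of Tw([n]) with j - i = k, the diagram (i+1,j) → (i+1,j-1) ← (i,j-1) is final in the under-category of (i,j) relative to the full subcategory Tw([n])_{≤ k-1} of Tw([n]) on objects (i',j') with j' - i' ≤ k-1; i.e., the inclusion of this cospan into the comma category ((i,j) ↓ Tw([n])_{≤ k-1}) is a final functor. -/
open CategoryTheory CategoryTheory.Limits

@[ext]
structure TwObj (n : ℕ) where
  i : ℕ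
  j : ℕ
  le_ij : i ≤ j
  le_n : j ≤ n

instance (n : ℕ) : PartialOrder (TwObj n) where
  le x y := x.i ≤ y.i ∧ y.j ≤ x.j
  le_refl x := ⟨le_refl _, le_refl _⟩
  le_trans a b c h h' := ⟨h.1.trans h'.1, h'.2.trans h.2⟩
  le_antisymm a b h h' := TwObj.ext (le_antisymm h.1 h'.1) (le_antisymm h'.2 h.2)

namespace TwAux

variable {n : ℕ} {X : TwObj n} {Q : TwObj n → Prop}

instance {x y : TwObj n} : Subsingleton (x ⟶ y) :=
  ⟨fun ⟨⟨_⟩⟩ ⟨⟨_⟩⟩ => rfl⟩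

def mkHomS {u v : StructuredArrow X (ObjectProperty.ι Q)}
    (h : u.right.obj ≤ v.right.obj) : u ⟶ v :=
  StructuredArrow.homMk (ObjectProperty.homMk (homOfLE h)) (Subsingleton.elim _ _)

instance {u v : StructuredArrow X (ObjectProperty.ι Q)} : Subsingleton (u ⟶ v) :=
  ⟨fun f g => StructuredArrow.hom_ext f g (InducedCategory.hom_ext (Subsingleton.elim _ _))⟩

variable {P : StructuredArrow X (ObjectProperty.ι Q) → Prop}
  {d : StructuredArrow X (ObjectProperty.ι Q)}

def mkHomC {x y : CostructuredArrow (ObjectProperty.ι P) d}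
    (h : x.left.obj.right.obj ≤ y.left.obj.right.obj) : x ⟶ y :=
  CostructuredArrow.homMk (ObjectProperty.homMk (mkHomS h)) (Subsingleton.elim _ _)

def mkObj (s : TwObj n) (hQ : Q s) (hle : X ≤ s)
    (hP : P (StructuredArrow.mk (Y := (⟨s, hQ⟩ : ObjectProperty.FullSubcategory Q)) (homOfLE hle)))
    (hd : s ≤ d.right.obj) :
    CostructuredArrow (ObjectProperty.ι P) d :=
  CostructuredArrow.mk (Y := (⟨_, hP⟩ : ObjectProperty.FullSubcategory P))
    (mkHomS (u := StructuredArrow.mk (Y := (⟨s, hQ⟩ : ObjectProperty.FullSubcategory Q)) (homOfLE hle)) (v := d) hd)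

lemma toD (x : CostructuredArrow (ObjectProperty.ι P) d) :
    x.left.obj.right.obj ≤ d.right.obj :=
  leOfHom x.hom.right.hom

end TwAux

lemma TwObj.le_def {n : ℕ} {x y : TwObj n} : x ≤ y ↔ x.i ≤ y.i ∧ y.j ≤ x.j := Iff.rfl

abbrev TwAux.Pred (n k i j : ℕ) (hji : i ≤ j) (hjn : j ≤ n) :
    StructuredArrow (⟨i, j, hji, hjn⟩ : TwObj n)
      (ObjectProperty.ι (fun x : TwObj n => x.j - x.i ≤ k - 1)) → Prop :=
  fun y =>
    (y.right.obj.i = i + 1 ∧ y.right.obj.j = j) ∨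
    (y.right.obj.i = i + 1 ∧ y.right.obj.j = j - 1) ∨
    (y.right.obj.i = i ∧ y.right.obj.j = j - 1)

/-- For `2 ≤ k ≤ n` and `(i, j)` in `Tw([n])` with `j - i = k`, the inclusion of the
cospan `(i+1, j) → (i+1, j-1) ← (i, j-1)` into the comma category
`((i, j) ↓ Tw([n])_{≤ k-1})`, where `Tw([n])_{≤ k-1}` is the full subcategory on objects
`(i', j')` with `j' - i' ≤ k - 1`, is a final functor in the sense that restriction along
it preserves limits (`Functor.Initial` in Mathlib's convention). -/
theorem twistedArrow_cospan_initial (n k i j : ℕ) (hk2 : 2 ≤ k) (hkn : k ≤ n)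
    (hji : i ≤ j) (hjn : j ≤ n) (hk : j - i = k) :
    (ObjectProperty.ι
      (fun y : StructuredArrow (⟨i, j, hji, hjn⟩ : TwObj n)
          (ObjectProperty.ι (fun x : TwObj n => x.j - x.i ≤ k - 1)) =>
        (y.right.obj.i = i + 1 ∧ y.right.obj.j = j) ∨
        (y.right.obj.i = i + 1 ∧ y.right.obj.j = j - 1) ∨
        (y.right.obj.i = i ∧ y.right.obj.j = j - 1))).Initial := by
  have hj : j = i + k := by omega
  constructor
  intro d
  show IsConnected (CostructuredArrow (ObjectProperty.ι (TwAux.Pred n k i j hji hjn)) d)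
  have hdi : i ≤ d.right.obj.i := (TwObj.le_def.mp (leOfHom d.hom)).1
  have hdj : d.right.obj.j ≤ j := (TwObj.le_def.mp (leOfHom d.hom)).2
  have hdQ : d.right.obj.j - d.right.obj.i ≤ k - 1 := d.right.property
  have hdij : d.right.obj.i ≤ d.right.obj.j := d.right.obj.le_ij
  have hd' : i + 1 ≤ d.right.obj.i ∨ d.right.obj.j ≤ j - 1 := by omega
  have ne : Nonempty
      (CostructuredArrow (ObjectProperty.ι (TwAux.Pred n k i j hji hjn)) d) := by
    rcases hd' with h | h
    · exact ⟨TwAux.mkObj ⟨i + 1, j, by omega, hjn⟩ (show j - (i + 1) ≤ k - 1 by omega)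
        ⟨Nat.le_succ i, le_refl j⟩ (Or.inl ⟨rfl, rfl⟩) ⟨h, hdj⟩⟩
    · exact ⟨TwAux.mkObj ⟨i, j - 1, by omega, by omega⟩ (show j - 1 - i ≤ k - 1 by omega)
        ⟨le_refl i, Nat.sub_le j 1⟩ (Or.inr (Or.inr ⟨rfl, rfl⟩)) ⟨hdi, h⟩⟩
  apply zigzag_isConnected
  intro x y
  by_cases hb : i + 1 ≤ d.right.obj.i ∧ d.right.obj.j ≤ j - 1
  · -- everything maps to the middle object (i+1, j-1)
    have hall : ∀ z : CostructuredArrow (ObjectProperty.ι (TwAux.Pred n k i j hji hjn)) d,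
        z.left.obj.right.obj ≤ (⟨i + 1, j - 1, by omega, by omega⟩ : TwObj n) := by
      intro z
      rcases z.left.property with ⟨h1, h2⟩ | ⟨h1, h2⟩ | ⟨h1, h2⟩ <;>
        exact ⟨show z.left.obj.right.obj.i ≤ i + 1 by omega,
          show j - 1 ≤ z.left.obj.right.obj.j by omega⟩
    let m : CostructuredArrow (ObjectProperty.ι (TwAux.Pred n k i j hji hjn)) d :=
      TwAux.mkObj ⟨i + 1, j - 1, by omega, by omega⟩
      (show j - 1 - (i + 1) ≤ k - 1 by omega)
      ⟨Nat.le_succ i, Nat.sub_le j 1⟩ (Or.inr (Or.inl ⟨rfl, rfl⟩)) ⟨hb.1, hb.2⟩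
    exact Relation.ReflTransGen.trans
      (Relation.ReflTransGen.single (Or.inl ⟨TwAux.mkHomC (y := m) (hall x)⟩))
      (Relation.ReflTransGen.single (Or.inr ⟨TwAux.mkHomC (x := y) (y := m) (hall y)⟩))
  · -- x and y have the same underlying object; direct morphism x ⟶ y
    rw [not_and_or] at hb
    have hxy : x.left.obj.right.obj ≤ y.left.obj.right.obj := by
      have hx1 : x.left.obj.right.obj.i ≤ d.right.obj.i := (TwObj.le_def.mp (TwAux.toD x)).1
      have hx2 : d.right.obj.j ≤ x.left.obj.right.obj.j := (TwObj.le_def.mp (TwAux.toD x)).2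
      have hy1 : y.left.obj.right.obj.i ≤ d.right.obj.i := (TwObj.le_def.mp (TwAux.toD y)).1
      have hy2 : d.right.obj.j ≤ y.left.obj.right.obj.j := (TwObj.le_def.mp (TwAux.toD y)).2
      rcases hb with hb | hb <;>
        rcases x.left.property with ⟨h1, h2⟩ | ⟨h1, h2⟩ | ⟨h1, h2⟩ <;>
        rcases y.left.property with ⟨h3, h4⟩ | ⟨h3, h4⟩ | ⟨h3, h4⟩ <;>
        exact ⟨by omega, by omega⟩
    exact Relation.ReflTransGen.single (Or.inl ⟨TwAux.mkHomC hxy⟩)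
end

section
/- Let C be a category with pullbacks. In the bicategory of spans of C, a span c ← s → c' is an equivalence (i.e., invertible up to isomorphism) if and only if both legs s → c and s → c' are isomorphisms in C. -/
open CategoryTheory CategoryTheory.Limits

universe v u

variable (C : Type u) [Category.{v} C]

/-- A span from `c` to `c'`: an apex with two legs. -/
structure SpanC (c c' : C) : Type max u v where
  apex : C
  l : apex ⟶ c
  r : apex ⟶ c'

variable {C}

/-- Morphisms of spans are maps of apexes commuting with the legs. -/
instance SpanC.category {c c' : C} : Category (SpanC C c c') where
  Hom S T := {φ : S.apex ⟶ T.apex // φ ≫ T.l = S.l ∧ φ ≫ T.r = S.r}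
  id S := ⟨𝟙 _, Category.id_comp _, Category.id_comp _⟩
  comp φ ψ := ⟨φ.1 ≫ ψ.1, by rw [Category.assoc, ψ.2.1, φ.2.1], by
    rw [Category.assoc, ψ.2.2, φ.2.2]⟩
  id_comp φ := Subtype.ext (Category.id_comp _)
  comp_id φ := Subtype.ext (Category.comp_id _)
  assoc φ ψ ξ := Subtype.ext (Category.assoc _ _ _)

namespace SpanC

@[ext]
lemma hom_ext {c c' : C} {S T : SpanC C c c'} (φ ψ : S ⟶ T) (h : φ.1 = ψ.1) : φ = ψ :=
  Subtype.ext h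

@[simp]
lemma comp_val {c c' : C} {S T U : SpanC C c c'} (φ : S ⟶ T) (ψ : T ⟶ U) :
    (φ ≫ ψ).1 = φ.1 ≫ ψ.1 := rfl

@[simp]
lemma id_val {c c' : C} (S : SpanC C c c') : (𝟙 S : S ⟶ S).1 = 𝟙 S.apex := rfl

@[simp]
lemma w_l {c c' : C} {S T : SpanC C c c'} (φ : S ⟶ T) : φ.1 ≫ T.l = S.l := φ.2.1

@[simp]
lemma w_r {c c' : C} {S T : SpanC C c c'} (φ : S ⟶ T) : φ.1 ≫ T.r = S.r := φ.2.2

/-- The identity span. -/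
def idSpan (c : C) : SpanC C c c := ⟨c, 𝟙 c, 𝟙 c⟩

/-- The span `a ← a → b` with identity left leg, image of `f` under `ι : C → Span(C)`. -/
def iota {a b : C} (f : a ⟶ b) : SpanC C a b := ⟨a, 𝟙 a, f⟩

/-- The reversed span `b ← a → a`, image of `f` under `ι^R : Cᵒᵖ → Span(C)`. -/
def iotaR {a b : C} (f : a ⟶ b) : SpanC C b a := ⟨a, f, 𝟙 a⟩

variable [HasPullbacks C]

/-- Composition of spans, by pullback. -/
noncomputable def hcomp {c c' c'' : C} (S : SpanC C c c') (T : SpanC C c' c'') :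
    SpanC C c c'' :=
  ⟨pullback S.r T.l, pullback.fst S.r T.l ≫ S.l, pullback.snd S.r T.l ≫ T.r⟩

@[simp] lemma hcomp_apex {c c' c'' : C} (S : SpanC C c c') (T : SpanC C c' c'') :
    (hcomp S T).apex = pullback S.r T.l := rfl

@[simp] lemma hcomp_l {c c' c'' : C} (S : SpanC C c c') (T : SpanC C c' c'') :
    (hcomp S T).l = pullback.fst S.r T.l ≫ S.l := rfl

@[simp] lemma hcomp_r {c c' c'' : C} (S : SpanC C c c') (T : SpanC C c' c'') :
    (hcomp S T).r = pullback.snd S.r T.l ≫ T.r := rfl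

/-- Horizontal composition of 2-cells. -/
noncomputable def hcompMap {c c' c'' : C} {S S' : SpanC C c c'} {T T' : SpanC C c' c''}
    (φ : S ⟶ S') (ψ : T ⟶ T') : hcomp S T ⟶ hcomp S' T' :=
  ⟨pullback.map S.r T.l S'.r T'.l φ.1 ψ.1 (𝟙 c') (by simp) (by simp),
    by simp only [hcomp_l]; erw [pullback.lift_fst_assoc]; simp,
    by simp only [hcomp_r]; erw [pullback.lift_snd_assoc]; simp⟩

@[simp]
lemma hcompMap_val {c c' c'' : C} {S S' : SpanC C c c'} {T T' : SpanC C c' c''}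
    (φ : S ⟶ S') (ψ : T ⟶ T') :
    (hcompMap φ ψ).1 = pullback.map S.r T.l S'.r T'.l φ.1 ψ.1 (𝟙 c') (by simp) (by simp) :=
  rfl

/-- Left whiskering. -/
noncomputable def whiskL {c c' c'' : C} (S : SpanC C c c') {T T' : SpanC C c' c''}
    (ψ : T ⟶ T') : hcomp S T ⟶ hcomp S T' :=
  hcompMap (𝟙 S) ψ

/-- Right whiskering. -/
noncomputable def whiskR {c c' c'' : C} {S S' : SpanC C c c'} (φ : S ⟶ S')
    (T : SpanC C c' c'') : hcomp S T ⟶ hcomp S' T :=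
  hcompMap φ (𝟙 T)

/-- A span morphism with invertible underlying morphism is an isomorphism of spans. -/
noncomputable def isoOfIsIso {c c' : C} {S T : SpanC C c c'} (φ : S ⟶ T) [IsIso φ.1] :
    S ≅ T where
  hom := φ
  inv := ⟨inv φ.1, by rw [IsIso.inv_comp_eq]; exact φ.2.1.symm, by
    rw [IsIso.inv_comp_eq]; exact φ.2.2.symm⟩
  hom_inv_id := by ext; simp
  inv_hom_id := by ext; simp

/-- Horizontal composition of invertible 2-cells. -/
noncomputable def hcompIso {c c' c'' : C} {S S' : SpanC C c c'} {T T' : SpanC C c' c''}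
    (e₁ : S ≅ S') (e₂ : T ≅ T') : hcomp S T ≅ hcomp S' T' :=
  haveI : IsIso e₁.hom.1 := ⟨e₁.inv.1, congrArg Subtype.val e₁.hom_inv_id,
    congrArg Subtype.val e₁.inv_hom_id⟩
  haveI : IsIso e₂.hom.1 := ⟨e₂.inv.1, congrArg Subtype.val e₂.hom_inv_id,
    congrArg Subtype.val e₂.inv_hom_id⟩
  haveI : IsIso (hcompMap e₁.hom e₂.hom).1 := by
    rw [hcompMap_val]
    exact (inferInstance : IsIso (pullback.map S.r T.l S'.r T'.l e₁.hom.1 e₂.hom.1 (𝟙 c')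
      (by simp) (by simp)))
  isoOfIsIso (hcompMap e₁.hom e₂.hom)

/-- The left unitor. -/
noncomputable def unitorL {c c' : C} (S : SpanC C c c') : hcomp (idSpan c) S ≅ S where
  hom := ⟨pullback.snd (idSpan c).r S.l, by
      simpa [idSpan] using (pullback.condition (f := (idSpan c).r) (g := S.l)).symm, by simp [idSpan]⟩
  inv := ⟨pullback.lift (f := (idSpan c).r) (g := S.l) S.l (𝟙 _) (by simp [idSpan]),
    by simp only [hcomp_l]; erw [pullback.lift_fst_assoc]; simp [idSpan],
    by simp only [hcomp_r]; erw [pullback.lift_snd_assoc]; simp⟩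
  hom_inv_id := by
    ext
    apply pullback.hom_ext
    · erw [comp_val, Category.assoc, pullback.lift_fst]
      simpa [idSpan] using (pullback.condition (f := (idSpan c).r) (g := S.l)).symm
    · erw [comp_val, Category.assoc, pullback.lift_snd]; simp
  inv_hom_id := by ext; erw [comp_val, pullback.lift_snd]; rfl

/-- The right unitor. -/
noncomputable def unitorR {c c' : C} (S : SpanC C c c') : hcomp S (idSpan c') ≅ S where
  hom := ⟨pullback.fst S.r (idSpan c').l, by simp [idSpan], by
      simpa [idSpan] using pullback.condition (f := S.r) (g := (idSpan c').l)⟩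
  inv := ⟨pullback.lift (f := S.r) (g := (idSpan c').l) (𝟙 _) S.r (by simp [idSpan]),
    by simp only [hcomp_l]; erw [pullback.lift_fst_assoc]; simp,
    by simp only [hcomp_r]; erw [pullback.lift_snd_assoc]; simp [idSpan]⟩
  hom_inv_id := by
    ext
    apply pullback.hom_ext
    · erw [comp_val, Category.assoc, pullback.lift_fst]; simp
    · erw [comp_val, Category.assoc, pullback.lift_snd]
      simpa [idSpan] using pullback.condition (f := S.r) (g := (idSpan c').l)
  inv_hom_id := by ext; erw [comp_val, pullback.lift_fst]; rfl

/-- The associator. -/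
noncomputable def assocIso {c c' c'' c''' : C} (S : SpanC C c c') (T : SpanC C c' c'')
    (U : SpanC C c'' c''') : hcomp (hcomp S T) U ≅ hcomp S (hcomp T U) where
  hom := ⟨(pullbackAssoc S.r T.l T.r U.l).hom, by simp, by simp⟩
  inv := ⟨(pullbackAssoc S.r T.l T.r U.l).inv, by simp, by simp⟩
  hom_inv_id := by ext; erw [comp_val, Iso.hom_inv_id]; rfl
  inv_hom_id := by ext; erw [comp_val, Iso.inv_hom_id]; rfl

/-- The triangle identities exhibiting `f ⊣ g` in the bicategory of spans, with unit `η`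
and counit `ε`. -/
noncomputable def IsSpanAdjunction {c c' : C} (f : SpanC C c c') (g : SpanC C c' c)
    (η : idSpan c ⟶ hcomp f g) (ε : hcomp g f ⟶ idSpan c') : Prop :=
  ((unitorL f).inv ≫ whiskR η f ≫ (assocIso f g f).hom ≫ whiskL f ε ≫ (unitorR f).hom
      = 𝟙 f) ∧
  ((unitorR g).inv ≫ whiskL g η ≫ (assocIso g f g).inv ≫ whiskR ε g ≫ (unitorL g).hom
      = 𝟙 g)

end SpanC

open SpanC in
/-- A span `c ← s → c'` is an equivalence (invertible up to isomorphism) in the bicategory of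
spans if and only if both legs are isomorphisms. -/
theorem span_equivalence_iff_legs_iso {C : Type u} [Category.{v} C] [HasPullbacks C]
    {c c' s : C} (α : s ⟶ c) (β : s ⟶ c') :
    (∃ T : SpanC C c' c,
        Nonempty (hcomp (⟨s, α, β⟩ : SpanC C c c') T ≅ idSpan c) ∧
        Nonempty (hcomp T (⟨s, α, β⟩ : SpanC C c c') ≅ idSpan c')) ↔
      (IsIso α ∧ IsIso β) := by
  constructor
  · rintro ⟨⟨t, γ, δ⟩, ⟨e₁⟩, ⟨e₂⟩⟩
    dsimp only [idSpan, hcomp] at e₁ e₂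
    haveI hφ : IsIso e₁.hom.1 := ⟨e₁.inv.1, congrArg Subtype.val e₁.hom_inv_id,
      congrArg Subtype.val e₁.inv_hom_id⟩
    haveI hψ : IsIso e₂.hom.1 := ⟨e₂.inv.1, congrArg Subtype.val e₂.hom_inv_id,
      congrArg Subtype.val e₂.inv_hom_id⟩
    have hi1 : e₁.inv.1 ≫ pullback.fst β γ ≫ α = 𝟙 c := by
      have := e₁.inv.2.1; simpa [idSpan] using this
    have hi2 : e₁.inv.1 ≫ pullback.snd β γ ≫ δ = 𝟙 c := by
      have := e₁.inv.2.2; simpa [idSpan] using this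
    have hj1 : e₂.inv.1 ≫ pullback.fst δ α ≫ γ = 𝟙 c' := by
      have := e₂.inv.2.1; simpa [idSpan] using this
    have hj2 : e₂.inv.1 ≫ pullback.snd δ α ≫ β = 𝟙 c' := by
      have := e₂.inv.2.2; simpa [idSpan] using this
    have hφl : e₁.hom.1 = pullback.fst β γ ≫ α := by
      have := e₁.hom.2.1; simpa [idSpan] using this
    have hψr : e₂.hom.1 = pullback.snd δ α ≫ β := by
      have := e₂.hom.2.2; simpa [idSpan] using this
    constructor
    · -- α is iso
      have hcond : 𝟙 s ≫ β = (β ≫ e₂.inv.1 ≫ pullback.fst δ α) ≫ γ := by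
        simp only [Category.assoc, Category.id_comp, hj1, Category.comp_id]
      have hmfst : pullback.lift (𝟙 s) (β ≫ e₂.inv.1 ≫ pullback.fst δ α) hcond ≫
          pullback.fst β γ = 𝟙 s := pullback.lift_fst _ _ _
      have hmφ : pullback.lift (𝟙 s) (β ≫ e₂.inv.1 ≫ pullback.fst δ α) hcond ≫
          e₁.hom.1 = α := by
        rw [hφl, reassoc_of% hmfst]
      have hretr : α ≫ inv e₁.hom.1 ≫ pullback.fst β γ = 𝟙 s := by
        calc α ≫ inv e₁.hom.1 ≫ pullback.fst β γ
            = (pullback.lift (𝟙 s) (β ≫ e₂.inv.1 ≫ pullback.fst δ α) hcond ≫ e₁.hom.1) ≫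
                inv e₁.hom.1 ≫ pullback.fst β γ := by rw [hmφ]
          _ = pullback.lift (𝟙 s) (β ≫ e₂.inv.1 ≫ pullback.fst δ α) hcond ≫
                pullback.fst β γ := by simp
          _ = 𝟙 s := hmfst
      refine ⟨⟨inv e₁.hom.1 ≫ pullback.fst β γ, hretr, ?_⟩⟩
      calc (inv e₁.hom.1 ≫ pullback.fst β γ) ≫ α
          = (e₁.inv.1 ≫ pullback.fst β γ ≫ α) ≫ (inv e₁.hom.1 ≫ pullback.fst β γ) ≫ α := by
            rw [hi1]; exact (Category.id_comp _).symm
        _ = e₁.inv.1 ≫ pullback.fst β γ ≫ (α ≫ inv e₁.hom.1 ≫ pullback.fst β γ) ≫ α := by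
            simp only [Category.assoc]
        _ = e₁.inv.1 ≫ pullback.fst β γ ≫ α := by rw [hretr, Category.id_comp]
        _ = 𝟙 c := hi1
    · -- β is iso
      have hcond : (α ≫ e₁.inv.1 ≫ pullback.snd β γ) ≫ δ = 𝟙 s ≫ α := by
        simp only [Category.assoc, Category.id_comp, hi2, Category.comp_id]
      have hmsnd : pullback.lift (α ≫ e₁.inv.1 ≫ pullback.snd β γ) (𝟙 s) hcond ≫
          pullback.snd δ α = 𝟙 s := pullback.lift_snd _ _ _
      have hmψ : pullback.lift (α ≫ e₁.inv.1 ≫ pullback.snd β γ) (𝟙 s) hcond ≫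
          e₂.hom.1 = β := by
        rw [hψr, reassoc_of% hmsnd]
      have hretr : β ≫ inv e₂.hom.1 ≫ pullback.snd δ α = 𝟙 s := by
        calc β ≫ inv e₂.hom.1 ≫ pullback.snd δ α
            = (pullback.lift (α ≫ e₁.inv.1 ≫ pullback.snd β γ) (𝟙 s) hcond ≫ e₂.hom.1) ≫
                inv e₂.hom.1 ≫ pullback.snd δ α := by rw [hmψ]
          _ = pullback.lift (α ≫ e₁.inv.1 ≫ pullback.snd β γ) (𝟙 s) hcond ≫
                pullback.snd δ α := by simp
          _ = 𝟙 s := hmsnd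
      refine ⟨⟨inv e₂.hom.1 ≫ pullback.snd δ α, hretr, ?_⟩⟩
      calc (inv e₂.hom.1 ≫ pullback.snd δ α) ≫ β
          = (e₂.inv.1 ≫ pullback.snd δ α ≫ β) ≫ (inv e₂.hom.1 ≫ pullback.snd δ α) ≫ β := by
            rw [hj2]; exact (Category.id_comp _).symm
        _ = e₂.inv.1 ≫ pullback.snd δ α ≫ (β ≫ inv e₂.hom.1 ≫ pullback.snd δ α) ≫ β := by
            simp only [Category.assoc]
        _ = e₂.inv.1 ≫ pullback.snd δ α ≫ β := by rw [hretr, Category.id_comp]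
        _ = 𝟙 c' := hj2
  · rintro ⟨hα, hβ⟩
    refine ⟨⟨s, β, α⟩, ⟨?_⟩, ⟨?_⟩⟩
    · -- hcomp ⟨s,α,β⟩ ⟨s,β,α⟩ has apex pullback β β, legs fst ≫ α, snd ≫ α
      have hfs : pullback.fst β β = pullback.snd β β := by
        rw [← cancel_mono β]; exact pullback.condition
      have h1 : (pullback.lift (inv α) (inv α) rfl : c ⟶ pullback β β) ≫ pullback.fst β β ≫ α = 𝟙 c := by rw [pullback.lift_fst_assoc, IsIso.inv_hom_id]
      have h2 : (pullback.lift (inv α) (inv α) rfl : c ⟶ pullback β β) ≫ pullback.snd β β ≫ α = 𝟙 c := by rw [← hfs, pullback.lift_fst_assoc, IsIso.inv_hom_id]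
      have h3 : (pullback.fst β β ≫ α) ≫ (pullback.lift (inv α) (inv α) rfl : c ⟶ pullback β β) = 𝟙 (pullback β β) := by
        apply pullback.hom_ext
        · rw [Category.assoc, Category.assoc, pullback.lift_fst, IsIso.hom_inv_id, Category.comp_id, Category.id_comp]
        · rw [Category.assoc, Category.assoc, pullback.lift_snd, IsIso.hom_inv_id, Category.comp_id, Category.id_comp, hfs]
      let m : idSpan c ⟶ hcomp (⟨s, α, β⟩ : SpanC C c c') ⟨s, β, α⟩ :=
        ⟨(pullback.lift (inv α) (inv α) rfl : c ⟶ pullback β β), by exact h1, by exact h2⟩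
      haveI : IsIso m.1 := by
        refine ⟨pullback.fst β β ≫ α, by exact h1, ?_⟩
        exact h3
      exact (isoOfIsIso m).symm
    · have hfs : pullback.fst α α = pullback.snd α α := by
        rw [← cancel_mono α]; exact pullback.condition
      have h1 : (pullback.lift (inv β) (inv β) rfl : c' ⟶ pullback α α) ≫ pullback.fst α α ≫ β = 𝟙 c' := by rw [pullback.lift_fst_assoc, IsIso.inv_hom_id]
      have h2 : (pullback.lift (inv β) (inv β) rfl : c' ⟶ pullback α α) ≫ pullback.snd α α ≫ β = 𝟙 c' := by rw [← hfs, pullback.lift_fst_assoc, IsIso.inv_hom_id]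
      have h3 : (pullback.fst α α ≫ β) ≫ (pullback.lift (inv β) (inv β) rfl : c' ⟶ pullback α α) = 𝟙 (pullback α α) := by
        apply pullback.hom_ext
        · rw [Category.assoc, Category.assoc, pullback.lift_fst, IsIso.hom_inv_id, Category.comp_id, Category.id_comp]
        · rw [Category.assoc, Category.assoc, pullback.lift_snd, IsIso.hom_inv_id, Category.comp_id, Category.id_comp, hfs]
      let m : idSpan c' ⟶ hcomp (⟨s, β, α⟩ : SpanC C c' c) ⟨s, α, β⟩ :=
        ⟨(pullback.lift (inv β) (inv β) rfl : c' ⟶ pullback α α), by exact h1, by exact h2⟩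
      haveI : IsIso m.1 := by
        refine ⟨pullback.fst α α ≫ β, by exact h1, ?_⟩
        exact h3
      exact (isoOfIsIso m).symm
end
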